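/- arXiv:1701.05961 — 7 statements merged into one kernel-verified Lean document; each statement's English description precedes it below -/
import Mathlib

section
/- For every finite simple graph G, γ_g(G) ≤ (1 + ln(1 + Δ(G))) · γ_f(G), where γ_g is the greedy domination number, γ_f the fractional domination number, and Δ(G) the maximum degree. -/
open Finset

namespace SG

variable {V : Type*}

/-- Closed neighborhood of a vertex as a `Finset`. -/
def closedNbhd [Fintype V] [DecidableEq V] (G : SimpleGraph V) [DecidableRel G.Adj]
    (v : V) : Finset V :=
  insert v (G.neighborFinset v)

/-- A fractional domination: weights in `[0,1]` with each closed neighborhood of weight `≥ 1`. -/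
def IsFracDom [Fintype V] [DecidableEq V] (G : SimpleGraph V) [DecidableRel G.Adj]
    (f : V → ℝ) : Prop :=
  (∀ v, 0 ≤ f v ∧ f v ≤ 1) ∧ ∀ v, 1 ≤ ∑ u ∈ closedNbhd G v, f u

/-- The fractional domination number. -/
noncomputable def fracDomNumber [Fintype V] [DecidableEq V] (G : SimpleGraph V)
    [DecidableRel G.Adj] : ℝ :=
  sInf {x | ∃ f, IsFracDom G f ∧ x = ∑ v, f v}

/-- A dominating set: every vertex not in `S` is adjacent to some vertex of `S`. -/
def IsDomSet (G : SimpleGraph V) (S : Finset V) : Prop :=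
  ∀ v, v ∉ S → ∃ u ∈ S, G.Adj u v

/-- The domination number. -/
noncomputable def domNumber [Fintype V] (G : SimpleGraph V) : ℕ :=
  sInf {k | ∃ S : Finset V, S.card = k ∧ IsDomSet G S}

variable [Fintype V] [LinearOrder V]

/-- Number of new (not yet dominated) vertices that `v` would dominate, given
that the vertices of `D` are already dominated. -/
def newScore (G : SimpleGraph V) [DecidableRel G.Adj] (D : Finset V) (v : V) : ℕ :=
  (closedNbhd G v \ D).card

/-- One run of the greedy domination algorithm (with fuel), starting with the
vertices of `D` already dominated.  At each step we pick a vertex dominating as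
many new vertices as possible, ties broken by taking the earliest vertex in the
linear order on `V`. -/
def greedyAux (G : SimpleGraph V) [DecidableRel G.Adj] : ℕ → Finset V → List V
  | 0, _ => []
  | (n + 1), D =>
    if D = Finset.univ then []
    else
      let C := Finset.univ.filter fun v => ∀ u, newScore G D u ≤ newScore G D v
      if h : C.Nonempty then
        C.min' h :: greedyAux G n (D ∪ closedNbhd G (C.min' h))
      else []

/-- The greedy dominating sequence of `G`. -/
def greedyList (G : SimpleGraph V) [DecidableRel G.Adj] : List V :=
  greedyAux G (Fintype.card V) ∅

/-- The greedy domination number: the length of the greedy dominating sequence. -/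
def greedyNumber (G : SimpleGraph V) [DecidableRel G.Adj] : ℕ :=
  (greedyList G).length

/-- The index of the first vertex in the greedy dominating sequence which dominates `u`. -/
def stepOf (G : SimpleGraph V) [DecidableRel G.Adj] (u : V) : ℕ :=
  (greedyList G).findIdx fun x => u ∈ closedNbhd G x

/-- `F(u)`: the set of vertices first dominated at the same greedy step as `u`. -/
def Fset (G : SimpleGraph V) [DecidableRel G.Adj] (u : V) : Finset V :=
  Finset.univ.filter fun w => stepOf G w = stepOf G u

end SG

/-!
Fix a fractional domination `f`. For a set `D` of already dominated vertices consider the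
potential `Φ(D) = ∑_x f x · H(|N[x] \ D|)`, with `H` the harmonic numbers. If the greedy step
picks `c`, dominating `m` new vertices, each new vertex `u` has `1 ≤ ∑_{N[u]} f`, so double
counting gives `1 ≤ ∑_x f x · a_x / m` with `a_x = |N[x] ∩ (N[c] \ D)|`. As `m` is the maximal
score, `m ≥ r_x = |N[x] \ D|`, hence `a_x / m ≤ H(r_x) - H(r_x - a_x)` and `Φ` drops by at least
one per step. Finally `Φ(∅) ≤ H(Δ + 1) · ∑ f ≤ (1 + log (1 + Δ)) · ∑ f`.
-/

lemma harmonic_mono : Monotone harmonic :=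
  monotone_nat_of_le_succ fun n => by
    rw [harmonic_succ]; exact le_add_of_nonneg_right (by positivity)

lemma harmonic_nonneg (n : ℕ) : 0 ≤ harmonic n :=
  harmonic_zero ▸ harmonic_mono n.zero_le

lemma div_add_harmonic_le_harmonic_add {a b m : ℕ} (h : b + a ≤ m) :
    (a : ℚ) / m + harmonic b ≤ harmonic (b + a) := by
  induction a with
  | zero => simp
  | succ a ih =>
    have hm : ((b + a + 1 : ℕ) : ℚ)⁻¹ ≥ (m : ℚ)⁻¹ :=
      inv_anti₀ (by positivity) (by exact_mod_cast h)
    rw [← add_assoc, harmonic_succ]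
    push_cast at hm ⊢
    rw [add_div, one_div]
    linarith [ih (by omega)]

namespace SG

variable {V : Type*} [Fintype V]

section ClosedNbhd

variable [DecidableEq V] (G : SimpleGraph V) [DecidableRel G.Adj]

lemma mem_closedNbhd_comm {u v : V} : u ∈ closedNbhd G v ↔ v ∈ closedNbhd G u := by
  simp only [closedNbhd, mem_insert, SimpleGraph.mem_neighborFinset, G.adj_comm, eq_comm]

lemma card_closedNbhd (v : V) : (closedNbhd G v).card = G.degree v + 1 := by
  rw [closedNbhd, card_insert_of_notMem (G.notMem_neighborFinset_self v),
    SimpleGraph.card_neighborFinset_eq_degree]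

lemma sum_sum_closedNbhd (A : Finset V) (f : V → ℝ) :
    ∑ u ∈ A, ∑ x ∈ closedNbhd G u, f x = ∑ x, (closedNbhd G x ∩ A).card * f x := by
  rw [sum_comm' (t' := univ) (s' := fun x => closedNbhd G x ∩ A)]
  · simp only [sum_const, nsmul_eq_mul]
  · intro u x
    simp [mem_closedNbhd_comm G (u := x), and_comm]

lemma harmonic_card_closedNbhd_le (v : V) :
    (harmonic (closedNbhd G v).card : ℝ) ≤ 1 + Real.log (1 + G.maxDegree) := by
  have hcard : (closedNbhd G v).card ≤ G.maxDegree + 1 := by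
    rw [card_closedNbhd]; exact Nat.succ_le_succ (G.degree_le_maxDegree v)
  calc (harmonic (closedNbhd G v).card : ℝ) ≤ harmonic (G.maxDegree + 1) := by
        exact_mod_cast harmonic_mono hcard
    _ ≤ 1 + Real.log (1 + G.maxDegree) := by
        simpa [add_comm] using harmonic_le_one_add_log (G.maxDegree + 1)

lemma le_fracDomNumber {a : ℝ} (h : ∀ f, IsFracDom G f → a ≤ ∑ v, f v) :
    a ≤ fracDomNumber G := by
  refine le_csInf ⟨∑ _v : V, 1, fun _ => 1, ⟨fun _ => ⟨zero_le_one, le_rfl⟩, fun v => ?_⟩, rfl⟩ ?_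
  · rw [sum_const, nsmul_one, Nat.one_le_cast]
    exact card_pos.mpr ⟨v, mem_insert_self _ _⟩
  · rintro _ ⟨f, hf, rfl⟩
    exact h f hf

def harmonicPotential (f : V → ℝ) (D : Finset V) : ℝ :=
  ∑ x, f x * harmonic (closedNbhd G x \ D).card

lemma harmonicPotential_nonneg {f : V → ℝ} (hf0 : ∀ v, 0 ≤ f v) (D : Finset V) :
    0 ≤ harmonicPotential G f D :=
  sum_nonneg fun x _ => mul_nonneg (hf0 x) (by exact_mod_cast harmonic_nonneg _)

end ClosedNbhd

section Greedy

variable [LinearOrder V] {G : SimpleGraph V} [DecidableRel G.Adj]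
  {f : V → ℝ} (hf0 : ∀ v, 0 ≤ f v) (hf : ∀ v, 1 ≤ ∑ u ∈ closedNbhd G v, f u)
include hf0 hf

lemma one_add_harmonicPotential_le {D : Finset V} {c : V} (hD : D ≠ univ)
    (hmax : ∀ u, newScore G D u ≤ newScore G D c) :
    1 + harmonicPotential G f (D ∪ closedNbhd G c) ≤ harmonicPotential G f D := by
  set m := newScore G D c
  obtain ⟨v, hv⟩ : ∃ v, v ∉ D := by simpa [eq_univ_iff_forall] using hD
  have hm : (0 : ℝ) < m := by
    have : v ∈ closedNbhd G v \ D := mem_sdiff.mpr ⟨mem_insert_self _ _, hv⟩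
    exact_mod_cast (card_pos.mpr ⟨v, this⟩).trans_le (hmax v)
  have hsplit (x : V) : (closedNbhd G x \ (D ∪ closedNbhd G c)).card
      + (closedNbhd G x ∩ (closedNbhd G c \ D)).card = (closedNbhd G x \ D).card := by
    rw [← card_sdiff_add_card_inter (closedNbhd G x \ D) (closedNbhd G c), sdiff_sdiff_left]
    congr 2
    ext; simp only [mem_inter, mem_sdiff]; tauto
  have hstep (x : V) : ((closedNbhd G x ∩ (closedNbhd G c \ D)).card / m : ℝ)
      + harmonic (closedNbhd G x \ (D ∪ closedNbhd G c)).card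
        ≤ harmonic (closedNbhd G x \ D).card := by
    have := div_add_harmonic_le_harmonic_add ((hsplit x).trans_le (hmax x))
    rw [hsplit x] at this
    have hcast := (Rat.cast_le (K := ℝ)).mpr this
    push_cast at hcast
    exact hcast
  have hcover : 1 ≤ ∑ x, f x * ((closedNbhd G x ∩ (closedNbhd G c \ D)).card / m) := by
    calc (1 : ℝ) = (∑ _u ∈ closedNbhd G c \ D, 1) / m := by
          rw [sum_const, nsmul_one]; exact (div_self hm.ne').symm
      _ ≤ (∑ u ∈ closedNbhd G c \ D, ∑ x ∈ closedNbhd G u, f x) / m := by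
        gcongr with u; exact hf u
      _ = _ := by
        rw [sum_sum_closedNbhd, sum_div]
        exact sum_congr rfl fun x _ => by ring
  calc 1 + harmonicPotential G f (D ∪ closedNbhd G c)
      ≤ ∑ x, f x * (((closedNbhd G x ∩ (closedNbhd G c \ D)).card / m : ℝ)
          + harmonic (closedNbhd G x \ (D ∪ closedNbhd G c)).card) := by
        simp only [harmonicPotential, mul_add, sum_add_distrib]; linarith
    _ ≤ harmonicPotential G f D :=
        sum_le_sum fun x _ => mul_le_mul_of_nonneg_left (hstep x) (hf0 x)

lemma length_greedyAux_le_harmonicPotential (n : ℕ) (D : Finset V) :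
    ((greedyAux G n D).length : ℝ) ≤ harmonicPotential G f D := by
  induction n generalizing D with
  | zero => simpa [greedyAux] using harmonicPotential_nonneg G hf0 D
  | succ n ih =>
    rw [greedyAux]
    split_ifs with hD
    · simpa using harmonicPotential_nonneg G hf0 D
    dsimp only
    split_ifs with hC
    · have hmax := (mem_filter.mp (min'_mem _ hC)).2
      rw [List.length_cons, Nat.cast_succ]
      linarith [ih (D ∪ closedNbhd G (min' _ hC)), one_add_harmonicPotential_le hf0 hf hD hmax]
    · simpa using harmonicPotential_nonneg G hf0 D

lemma greedyNumber_le_sum_mul_harmonic :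
    (greedyNumber G : ℝ) ≤ ∑ x, f x * harmonic (closedNbhd G x).card := by
  have h := length_greedyAux_le_harmonicPotential hf0 hf (Fintype.card V) ∅
  simp only [harmonicPotential, sdiff_empty] at h
  exact h

end Greedy

/-- `γ_g(G) ≤ (1 + ln(1+Δ(G))) ⬝ γ_f(G)`. -/
theorem greedy_le_log_mul_fracDom {V : Type*} [Fintype V] [LinearOrder V]
    (G : SimpleGraph V) [DecidableRel G.Adj] :
    (greedyNumber G : ℝ) ≤ (1 + Real.log (1 + (G.maxDegree : ℝ))) * fracDomNumber G := by
  have hc : 0 < 1 + Real.log (1 + (G.maxDegree : ℝ)) :=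
    add_pos_of_pos_of_nonneg one_pos (Real.log_nonneg (by simp))
  rw [mul_comm, ← div_le_iff₀ hc]
  refine le_fracDomNumber G fun f hf => ?_
  rw [div_le_iff₀ hc, sum_mul]
  calc (greedyNumber G : ℝ) ≤ ∑ x, f x * harmonic (closedNbhd G x).card :=
        greedyNumber_le_sum_mul_harmonic (fun v => (hf.1 v).1) hf.2
    _ ≤ ∑ x, f x * (1 + Real.log (1 + G.maxDegree)) := by
        gcongr with x
        exacts [(hf.1 x).1, harmonic_card_closedNbhd_le G x]

end SG
end

section
/- In the greedy domination algorithm on a graph G, fix a vertex v of degree d and list the vertices of N[v] as u_1, …, u_p (p = d+1) in the order in which they are first dominated by the greedy sequence. Then for each i, the number of vertices first dominated at the same greedy step as u_i is at least p + 1 − i. -/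
open Finset

namespace SG

variable {V : Type*}

variable [Fintype V] [LinearOrder V]

section Aux

variable (G : SimpleGraph V) [DecidableRel G.Adj]

/-- Set of vertices dominated by a list of vertices. -/
def dset (L : List V) : Finset V := L.foldr (fun x D => closedNbhd G x ∪ D) ∅

@[simp] lemma dset_nil : dset G ([] : List V) = ∅ := rfl
@[simp] lemma dset_cons (x : V) (L : List V) :
    dset G (x :: L) = closedNbhd G x ∪ dset G L := rfl

lemma mem_dset {w : V} {L : List V} : w ∈ dset G L ↔ ∃ x ∈ L, w ∈ closedNbhd G x := by
  induction L with
  | nil => simp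
  | cons x L ih => simp [ih]

lemma C_nonempty {D : Finset V} (hD : D ≠ Finset.univ) :
    (Finset.univ.filter fun v => ∀ u, newScore G D u ≤ newScore G D v).Nonempty := by
  have hne : ∃ w, w ∉ D := by
    by_contra h; push_neg at h; exact hD (Finset.eq_univ_iff_forall.2 h)
  obtain ⟨w0, hw0⟩ := hne
  obtain ⟨b, -, hb⟩ := Finset.exists_max_image Finset.univ (newScore G D) ⟨w0, mem_univ w0⟩
  exact ⟨b, mem_filter.2 ⟨mem_univ _, fun u => hb u (mem_univ u)⟩⟩

lemma greedyAux_cons (n : ℕ) {D : Finset V} (hD : D ≠ Finset.univ) :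
    greedyAux G (n+1) D =
      (Finset.univ.filter fun v => ∀ u, newScore G D u ≤ newScore G D v).min' (C_nonempty G hD)
        :: greedyAux G n (D ∪ closedNbhd G
          ((Finset.univ.filter fun v => ∀ u, newScore G D u ≤ newScore G D v).min'
            (C_nonempty G hD))) := by
  rw [greedyAux]
  simp only [if_neg hD, dif_pos (C_nonempty G hD)]

lemma min'_spec {D : Finset V} (hD : D ≠ Finset.univ) (w : V) :
    newScore G D w ≤ newScore G D
      ((Finset.univ.filter fun v => ∀ u, newScore G D u ≤ newScore G D v).min'
        (C_nonempty G hD)) := by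
  have := Finset.min'_mem _ (C_nonempty G hD)
  rw [Finset.mem_filter] at this
  exact this.2 w

/-- Each greedy pick maximizes the new score against the currently dominated set. -/
lemma greedyAux_isMax (n : ℕ) : ∀ (D : Finset V) (k : ℕ) (x : V) (t : List V),
    (greedyAux G n D).drop k = x :: t → ∀ (w : V),
    newScore G (D ∪ dset G ((greedyAux G n D).take k)) w ≤
      newScore G (D ∪ dset G ((greedyAux G n D).take k)) x := by
  induction n with
  | zero => intro D k x t h; simp [greedyAux] at h
  | succ n ih =>
    intro D k x t h w
    by_cases hD : D = Finset.univ
    · rw [greedyAux] at h; simp [hD] at h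
    · rw [greedyAux_cons G n hD] at h ⊢
      set x0 := (Finset.univ.filter fun v => ∀ u, newScore G D u ≤ newScore G D v).min'
        (C_nonempty G hD) with hx0
      match k with
      | 0 =>
        simp only [List.drop_zero, List.cons.injEq] at h
        rw [← h.1]
        simpa using min'_spec G hD w
      | (k' + 1) =>
        rw [List.drop_succ_cons] at h
        have := ih (D ∪ closedNbhd G x0) k' x t h w
        simpa [List.take_succ_cons, Finset.union_assoc] using this

lemma greedyAux_isMax' (n : ℕ) (D : Finset V) (k : ℕ)
    (hk : k < (greedyAux G n D).length) (w : V) :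
    newScore G (D ∪ dset G ((greedyAux G n D).take k)) w ≤
      newScore G (D ∪ dset G ((greedyAux G n D).take k)) ((greedyAux G n D).get ⟨k, hk⟩) :=
  greedyAux_isMax G n D k _ _ (List.drop_eq_getElem_cons hk) w

/-- After enough fuel, the greedy run dominates everything. -/
lemma greedyAux_covers (n : ℕ) : ∀ D : Finset V, (Finset.univ \ D).card ≤ n →
    ∀ w : V, w ∈ D ∨ w ∈ dset G (greedyAux G n D) := by
  induction n with
  | zero =>
    intro D hn w
    left
    have : Finset.univ \ D = ∅ := Finset.card_eq_zero.1 (Nat.le_zero.1 hn)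
    have hu : D = Finset.univ := by
      apply Finset.eq_univ_iff_forall.2
      intro a
      by_contra ha
      have : a ∈ Finset.univ \ D := Finset.mem_sdiff.2 ⟨mem_univ a, ha⟩
      simp [‹Finset.univ \ D = ∅›] at this
    rw [hu]; exact mem_univ w
  | succ n ih =>
    intro D hn w
    by_cases hD : D = Finset.univ
    · left; rw [hD]; exact mem_univ w
    · rw [greedyAux_cons G n hD]
      set x := (Finset.univ.filter fun v => ∀ u, newScore G D u ≤ newScore G D v).min'
        (C_nonempty G hD) with hx
      -- the pick dominates at least one new vertex
      have hpos : 0 < newScore G D x := by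
        obtain ⟨w0, hw0⟩ : ∃ w0, w0 ∉ D := by
          by_contra h; push_neg at h; exact hD (Finset.eq_univ_iff_forall.2 h)
        have h1 : 0 < newScore G D w0 := by
          apply Finset.card_pos.2
          exact ⟨w0, Finset.mem_sdiff.2 ⟨Finset.mem_insert_self _ _, hw0⟩⟩
        exact lt_of_lt_of_le h1 (min'_spec G hD w0)
      obtain ⟨y, hy⟩ := Finset.card_pos.1 hpos
      rw [Finset.mem_sdiff] at hy
      have hlt : (Finset.univ \ (D ∪ closedNbhd G x)).card < (Finset.univ \ D).card := by
        apply Finset.card_lt_card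
        constructor
        · exact Finset.sdiff_subset_sdiff (le_refl _) Finset.subset_union_left
        · intro hsub
          have hy1 : y ∈ Finset.univ \ D := Finset.mem_sdiff.2 ⟨mem_univ y, hy.2⟩
          have hy2 := hsub hy1
          rw [Finset.mem_sdiff] at hy2
          exact hy2.2 (Finset.mem_union_right _ hy.1)
      have hle : (Finset.univ \ (D ∪ closedNbhd G x)).card ≤ n := by omega
      rcases ih (D ∪ closedNbhd G x) hle w with h | h
      · rcases Finset.mem_union.1 h with h | h
        · left; exact h
        · right; exact Finset.mem_union.2 (Or.inl h)
      · right; exact Finset.mem_union.2 (Or.inr h)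

lemma greedyList_eq : greedyList G = greedyAux G (Fintype.card V) ∅ := rfl

lemma stepOf_lt (w : V) : stepOf G w < (greedyList G).length := by
  apply List.findIdx_lt_length_of_exists
  have := greedyAux_covers G (Fintype.card V) ∅ (by simp) w
  rcases this with h | h
  · simp at h
  · rw [mem_dset] at h
    obtain ⟨x, hx, hwx⟩ := h
    exact ⟨x, hx, by simpa using hwx⟩

lemma mem_dset_take {w : V} {L : List V} {k : ℕ} (hk : k ≤ L.length) :
    w ∈ dset G (L.take k) ↔ ∃ j, ∃ hj : j < k, w ∈ closedNbhd G (L.get ⟨j, lt_of_lt_of_le hj hk⟩) := by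
  rw [mem_dset]
  constructor
  · rintro ⟨x, hx, hwx⟩
    rw [List.mem_iff_getElem] at hx
    obtain ⟨j, hj, rfl⟩ := hx
    rw [List.length_take] at hj
    refine ⟨j, lt_of_lt_of_le (lt_min_iff.1 hj).1 (le_refl _), ?_⟩
    simpa [List.getElem_take] using hwx
  · rintro ⟨j, hj, hwx⟩
    refine ⟨L.get ⟨j, lt_of_lt_of_le hj hk⟩, ?_, hwx⟩
    rw [List.mem_iff_getElem]
    exact ⟨j, by simp [List.length_take]; omega, by simp [List.getElem_take]⟩

lemma stepOf_eq_iff {w : V} {k : ℕ} (hk : k < (greedyList G).length) :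
    stepOf G w = k ↔ w ∈ closedNbhd G ((greedyList G).get ⟨k, hk⟩) ∧
      w ∉ dset G ((greedyList G).take k) := by
  rw [stepOf, List.findIdx_eq hk]
  rw [mem_dset_take G (le_of_lt hk)]
  simp only [decide_eq_true_eq, decide_eq_false_iff_not]
  constructor
  · rintro ⟨h1, h2⟩
    refine ⟨by simpa using h1, ?_⟩
    rintro ⟨j, hj, hwx⟩
    exact h2 j hj (by simpa using hwx)
  · rintro ⟨h1, h2⟩
    refine ⟨by simpa using h1, fun j hj hwx => h2 ⟨j, hj, by simpa using hwx⟩⟩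

end Aux


/-- listing the vertices `u 0, u 1, …` of `N[v]` in the order in
which they are first dominated by the greedy sequence, the number of vertices
first dominated at the same greedy step as `u i` is at least `p - i`
(where `p = deg v + 1` and indexing is zero-based, i.e. `|F(u_i)| ≥ p + 1 - i`
for one-based indexing). -/
theorem greedy_Fset_card_lower {V : Type*} [Fintype V] [LinearOrder V]
    (G : SimpleGraph V) [DecidableRel G.Adj] (v : V)
    (u : Fin (G.degree v + 1) → V)
    (hinj : Function.Injective u)
    (hmem : ∀ i, u i ∈ closedNbhd G v)
    (hord : ∀ i j : Fin (G.degree v + 1), i ≤ j → stepOf G (u i) ≤ stepOf G (u j)) :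
    ∀ i : Fin (G.degree v + 1), G.degree v + 1 - (i : ℕ) ≤ (Fset G (u i)).card := by
  intro i
  have hk : stepOf G (u i) < (greedyList G).length := stepOf_lt G (u i)
  set L := greedyList G with hL
  set k := stepOf G (u i) with hkdef
  have hFset : Fset G (u i) = closedNbhd G (L.get ⟨k, hk⟩) \ dset G (L.take k) := by
    ext w
    simp only [Fset, Finset.mem_filter, Finset.mem_univ, true_and, Finset.mem_sdiff, ← hkdef]
    exact stepOf_eq_iff G hk
  have hsub : (Finset.Ici i).image u ⊆ closedNbhd G v \ dset G (L.take k) := by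
    intro w hw
    rw [Finset.mem_image] at hw
    obtain ⟨j, hj, rfl⟩ := hw
    rw [Finset.mem_Ici] at hj
    refine Finset.mem_sdiff.2 ⟨hmem j, ?_⟩
    intro hmem'
    obtain ⟨j', hj', hN⟩ := (mem_dset_take G (le_of_lt hk)).1 hmem'
    have hle : stepOf G (u j) ≤ j' := by
      by_contra hgt
      push_neg at hgt
      have hfalse := List.not_of_lt_findIdx
        (p := fun x => decide ((u j) ∈ closedNbhd G x)) (xs := L) hgt
      simp only [decide_eq_false_iff_not] at hfalse
      exact hfalse (by simpa [List.get_eq_getElem] using hN)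
    have hord' := hord i j hj
    omega
  have hcard1 : G.degree v + 1 - (i : ℕ) ≤ (closedNbhd G v \ dset G (L.take k)).card := by
    have h1 : ((Finset.Ici i).image u).card = G.degree v + 1 - (i : ℕ) := by
      rw [Finset.card_image_of_injective _ hinj, Fin.card_Ici]
    rw [← h1]
    exact Finset.card_le_card hsub
  have hle2 : (closedNbhd G v \ dset G (L.take k)).card ≤
      (closedNbhd G (L.get ⟨k, hk⟩) \ dset G (L.take k)).card := by
    have h2 := greedyAux_isMax' G (Fintype.card V) ∅ k
      (by rw [← greedyList_eq]; exact hk) v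
    simpa [← greedyList_eq, newScore, Finset.empty_union, ← hL] using h2
  rw [hFset]
  omega


end SG
end

section
/- Let t be a positive integer, d = 2t−1, G = K_{2t} minus a perfect matching, and J_t the strong product of d copies of G. Then no set of d vertices dominates J_t; i.e., γ(J_t) ≥ d + 1 = 2t. -/
open Finset

namespace SG

variable {V : Type*}

/-- `K_{2t}` minus a perfect matching: vertices `0,…,2t-1`, with the matching
pairing `2k` with `2k+1`; two vertices are adjacent iff they lie in different
matching pairs. -/
def Kmm (t : ℕ) : SimpleGraph (Fin (2 * t)) where
  Adj i j := (i : ℕ) / 2 ≠ (j : ℕ) / 2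
  symm := ⟨fun _ _ h => Ne.symm h⟩
  loopless := ⟨fun _ h => h rfl⟩

instance (t : ℕ) : DecidableRel (Kmm t).Adj :=
  fun i j => inferInstanceAs (Decidable ((i : ℕ) / 2 ≠ (j : ℕ) / 2))

/-- `J_t`: the strong product of `d = 2t - 1` copies of `K_{2t}` minus a
perfect matching.  Distinct tuples are adjacent iff they are componentwise
equal-or-adjacent. -/
def Jt (t : ℕ) : SimpleGraph (Fin (2 * t - 1) → Fin (2 * t)) where
  Adj x y := x ≠ y ∧ ∀ i, x i = y i ∨ (Kmm t).Adj (x i) (y i)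
  symm := by
    constructor
    rintro x y ⟨h1, h2⟩
    exact ⟨Ne.symm h1, fun i => (h2 i).imp Eq.symm fun a => (Kmm t).adj_symm a⟩
  loopless := ⟨fun x h => h.1 rfl⟩

instance (t : ℕ) : DecidableRel (Jt t).Adj :=
  fun x y =>
    inferInstanceAs (Decidable (x ≠ y ∧ ∀ i, x i = y i ∨ (Kmm t).Adj (x i) (y i)))

theorem le_domNumber_of_forall_card_lt [Fintype V] (G : SimpleGraph V) (k : ℕ)
    (h : ∀ S : Finset V, S.card < k → ¬ IsDomSet G S) : k ≤ domNumber G := by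
  have hne : {k | ∃ S : Finset V, S.card = k ∧ IsDomSet G S}.Nonempty :=
    ⟨_, univ, rfl, fun v hv => absurd (mem_univ v) hv⟩
  obtain ⟨S, hS, hdom⟩ := Nat.sInf_mem hne
  by_contra! hk
  exact h S (hS ▸ hk) hdom

theorem exists_escape_of_card_le {ι W : Type*} [Fintype ι] [Nonempty W] (H : SimpleGraph W)
    (hH : ∀ v, ∃ w, w ≠ v ∧ ¬ H.Adj v w) (S : Finset (ι → W)) (hS : S.card ≤ Fintype.card ι) :
    ∃ y : ι → W, ∀ u ∈ S, ∃ i, u i ≠ y i ∧ ¬ H.Adj (u i) (y i) := by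
  choose bar hbar_ne hbar_adj using hH
  obtain ⟨g⟩ := Function.Embedding.nonempty_of_card_le (α := S) (β := ι) (by simpa using hS)
  -- Cantor's diagonal: the coordinate `g u` of `y` is reserved for escaping `u`.
  refine ⟨Function.extend g (fun u => bar (u.1 (g u))) (fun _ => Classical.arbitrary W),
    fun u hu => ⟨g ⟨u, hu⟩, ?_⟩⟩
  rw [g.injective.extend_apply]
  exact ⟨(hbar_ne _).symm, hbar_adj _⟩

theorem Kmm.exists_ne_not_adj (t : ℕ) (v : Fin (2 * t)) : ∃ w, w ≠ v ∧ ¬ (Kmm t).Adj v w := by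
  obtain ⟨v, hv⟩ := v
  refine ⟨⟨if v % 2 = 0 then v + 1 else v - 1, by split <;> omega⟩, ?_, ?_⟩
  · simp only [ne_eq, Fin.mk.injEq]
    split <;> omega
  · simp only [Kmm, ne_eq, not_not]
    split <;> omega

theorem Jt_not_isDomSet_of_card_le (t : ℕ) (ht : 1 ≤ t)
    (S : Finset (Fin (2 * t - 1) → Fin (2 * t))) (hS : S.card ≤ 2 * t - 1) :
    ¬ IsDomSet (Jt t) S := by
  have : Nonempty (Fin (2 * t)) := ⟨⟨0, by omega⟩⟩
  obtain ⟨y, hy⟩ := exists_escape_of_card_le (Kmm t) (Kmm.exists_ne_not_adj t) S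
    (by simpa using hS)
  intro hdom
  have hyS : y ∉ S := fun hmem => by
    obtain ⟨i, hne, -⟩ := hy y hmem
    exact hne rfl
  obtain ⟨u, hu, -, hadj⟩ := hdom y hyS
  obtain ⟨i, hne, hnadj⟩ := hy u hu
  exact (hadj i).elim hne hnadj

/-- no set of `d = 2t - 1` vertices dominates `J_t`;
hence `γ(J_t) ≥ d + 1 = 2t`. -/
theorem Jt_no_small_domSet (t : ℕ) (ht : 1 ≤ t) :
    (∀ S : Finset (Fin (2 * t - 1) → Fin (2 * t)),
        S.card = 2 * t - 1 → ¬ IsDomSet (Jt t) S) ∧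
      2 * t ≤ domNumber (Jt t) := by
  have hsmall := Jt_not_isDomSet_of_card_le t ht
  exact ⟨fun S hS => hsmall S hS.le,
    le_domNumber_of_forall_card_lt _ _ fun S hS => hsmall S (by omega)⟩

end SG
end

section
/- Let t be a positive integer, d = 2t−1, G = K_{2t} minus a perfect matching, and J_t the strong product of d copies of G. Then the set A = {(v,v,…,v) : v ∈ V(G)} of d+1 diagonal vertices is a dominating set of J_t; hence γ(J_t) = 2t. -/
open Finset

namespace SG

variable {V : Type*}

lemma domNumber_eq_card_of_isDomSet [Fintype V] {G : SimpleGraph V} {S : Finset V}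
    (hS : IsDomSet G S) (hmin : ∀ T : Finset V, IsDomSet G T → S.card ≤ T.card) :
    domNumber G = S.card :=
  le_antisymm (Nat.sInf_le ⟨S, rfl, hS⟩)
    (le_csInf ⟨S.card, S, rfl, hS⟩ fun _ ⟨T, hT, hTdom⟩ => hT ▸ hmin T hTdom)

lemma exists_forall_mem_exists_apply_eq_of_card_le {ι α : Type*} [Fintype ι] [Nonempty α]
    (S : Finset (ι → α)) (hS : S.card ≤ Fintype.card ι) (p : α → α) :
    ∃ x : ι → α, ∀ u ∈ S, ∃ i, x i = p (u i) := by
  obtain ⟨g⟩ : Nonempty (S ↪ ι) := Function.Embedding.nonempty_of_card_le (by simpa using hS)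
  refine ⟨Function.extend g (fun u : S => p (u.1 (g u))) fun _ => Classical.arbitrary α,
    fun u hu => ⟨g ⟨u, hu⟩, ?_⟩⟩
  exact g.injective.extend_apply _ _ (⟨u, hu⟩ : S)

def partner (t : ℕ) (b : Fin (2 * t)) : Fin (2 * t) :=
  ⟨if (b : ℕ) % 2 = 0 then (b : ℕ) + 1 else (b : ℕ) - 1, by
    have hb := b.isLt
    split_ifs <;> omega⟩

lemma partner_ne (t : ℕ) (b : Fin (2 * t)) : partner t b ≠ b := by
  simp only [partner, Fin.ne_iff_vne]
  split_ifs <;> omega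

lemma not_Kmm_adj_partner (t : ℕ) (b : Fin (2 * t)) : ¬ (Kmm t).Adj b (partner t b) := by
  have hb := b.isLt
  simp only [Kmm, partner, not_not]
  split_ifs <;> omega

lemma eq_or_Kmm_adj_of_ne_partner {t : ℕ} {a b : Fin (2 * t)} (h : a ≠ partner t b) :
    a = b ∨ (Kmm t).Adj a b := by
  by_contra! hab
  obtain ⟨hne, hdiv⟩ := hab
  simp only [Kmm, ne_eq, not_not] at hdiv
  refine h (Fin.ext ?_)
  have hne' : (a : ℕ) ≠ b := Fin.val_ne_of_ne hne
  simp only [partner]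
  split_ifs <;> omega

/-- A tuple has only `2t - 1` coordinates, so some vertex `v` is the partner of none of them,
and the diagonal vertex `(v, …, v)` is then equal-or-adjacent to it in every coordinate. -/
lemma isDomSet_Jt_diagonal {t : ℕ} (ht : 1 ≤ t) :
    IsDomSet (Jt t)
      ((univ : Finset (Fin (2 * t))).image
        fun v => (fun _ => v : Fin (2 * t - 1) → Fin (2 * t))) := by
  intro x hx
  have hcard : Fintype.card (Fin (2 * t - 1)) < Fintype.card (Fin (2 * t)) := by simp; omega
  obtain ⟨v, hv⟩ : ∃ v, v ∉ Set.range fun i => partner t (x i) := by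
    by_contra! hsurj
    exact hcard.not_ge (Fintype.card_le_of_surjective _ fun v => hsurj v)
  have hmem : (fun _ => v) ∈
      (univ : Finset (Fin (2 * t))).image fun v => (fun _ => v : Fin (2 * t - 1) → Fin (2 * t)) :=
    mem_image_of_mem _ (mem_univ v)
  refine ⟨_, hmem, fun h => hx (h ▸ hmem), fun i => eq_or_Kmm_adj_of_ne_partner ?_⟩
  exact fun h => hv ⟨i, h.symm⟩

/-- If `S` has fewer than `2t` vertices, diagonalizing against `S` with `partner` yields a
vertex that in some coordinate is neither equal nor adjacent to any member of `S`. -/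
lemma two_mul_le_card_of_isDomSet_Jt {t : ℕ} (ht : 1 ≤ t)
    {S : Finset (Fin (2 * t - 1) → Fin (2 * t))} (hS : IsDomSet (Jt t) S) : 2 * t ≤ S.card := by
  by_contra! hlt
  have : Nonempty (Fin (2 * t)) := ⟨⟨0, by omega⟩⟩
  obtain ⟨x, hx⟩ :=
    exists_forall_mem_exists_apply_eq_of_card_le S (by simp; omega) (partner t)
  have hfar : ∀ u ∈ S, ∃ i, ¬ (u i = x i ∨ (Kmm t).Adj (u i) (x i)) := by
    intro u hu
    obtain ⟨i, hi⟩ := hx u hu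
    refine ⟨i, ?_⟩
    rw [hi, not_or]
    exact ⟨(partner_ne t _).symm, not_Kmm_adj_partner t _⟩
  have hxS : x ∉ S := fun hxS => by
    obtain ⟨i, hi⟩ := hfar x hxS
    exact hi (Or.inl rfl)
  obtain ⟨u, hu, hadj⟩ := hS x hxS
  obtain ⟨i, hi⟩ := hfar u hu
  exact hi (hadj.2 i)

/-- the `d + 1` diagonal vertices dominate `J_t`;
hence `γ(J_t) = 2t`. -/
theorem Jt_diagonal_dominates (t : ℕ) (ht : 1 ≤ t) :
    IsDomSet (Jt t)
        ((Finset.univ : Finset (Fin (2 * t))).image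
          fun v => (fun _ => v : Fin (2 * t - 1) → Fin (2 * t))) ∧
      domNumber (Jt t) = 2 * t := by
  have hinj : Function.Injective fun v => (fun _ => v : Fin (2 * t - 1) → Fin (2 * t)) :=
    fun a b h => congrFun h ⟨0, by omega⟩
  have hcard : ((univ : Finset (Fin (2 * t))).image
      fun v => (fun _ => v : Fin (2 * t - 1) → Fin (2 * t))).card = 2 * t := by
    rw [card_image_of_injective _ hinj, card_univ, Fintype.card_fin]
  refine ⟨isDomSet_Jt_diagonal ht, ?_⟩
  rw [domNumber_eq_card_of_isDomSet (isDomSet_Jt_diagonal ht), hcard]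
  exact fun T hT => hcard.le.trans (two_mul_le_card_of_isDomSet_Jt ht hT)

end SG
end

section
/- Let t ≥ 4 and construct H_t as follows: take four vertices S = {u_1,u_2,u_3,u_4} together with disjoint cliques K_4, K_8, …, K_{2^{t+1}} (sizes 4·2^{j} for j = 0,…,t−1); each u_i is adjacent to exactly one quarter of the vertices of each clique, and no two u_i share a common neighbor. Then γ_f(H_t) = γ(H_t) = 4. -/
/-!
The closed neighborhoods of the four vertices of `S` are pairwise disjoint, so every fractional
domination has weight at least `4`; the indicator of a dominating set is a fractional domination,
so `γ ≥ γ_f ≥ 4`. Conversely `S` dominates: in each clique `C j` the neighborhoods of the four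
vertices of `S` are disjoint of size `2 ^ j`, hence exhaust its `4 * 2 ^ j` vertices.
-/

open Finset

namespace SG

variable {V : Type*}

variable [Fintype V] [DecidableEq V] {G : SimpleGraph V} [DecidableRel G.Adj]

@[simp]
theorem mem_closedNbhd {v w : V} : w ∈ closedNbhd G v ↔ w = v ∨ G.Adj v w := by
  simp [closedNbhd]

theorem IsDomSet.isFracDom_indicator {D : Finset V} (hD : IsDomSet G D) :
    IsFracDom G fun v => if v ∈ D then 1 else 0 := by
  refine ⟨fun v => by dsimp only; split_ifs <;> norm_num, fun v => ?_⟩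
  obtain ⟨u, huD, hu⟩ : ∃ u ∈ D, u ∈ closedNbhd G v := by
    by_cases hv : v ∈ D
    · exact ⟨v, hv, by simp⟩
    · obtain ⟨u, huD, huv⟩ := hD v hv
      exact ⟨u, huD, by simp [huv.symm]⟩
  calc (1 : ℝ) = if u ∈ D then 1 else 0 := by simp [huD]
    _ ≤ ∑ w ∈ closedNbhd G v, if w ∈ D then 1 else 0 :=
      single_le_sum (f := fun w => if w ∈ D then (1 : ℝ) else 0)
        (fun w _ => by split_ifs <;> norm_num) hu

theorem sum_indicator_eq_card (D : Finset V) :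
    ∑ v, (if v ∈ D then 1 else 0 : ℝ) = #D := by
  simp

theorem card_le_sum_of_isFracDom {S : Finset V}
    (hS : (S : Set V).PairwiseDisjoint (closedNbhd G)) {f : V → ℝ} (hf : IsFracDom G f) :
    (#S : ℝ) ≤ ∑ v, f v :=
  calc (#S : ℝ) = ∑ _u ∈ S, (1 : ℝ) := by simp
    _ ≤ ∑ u ∈ S, ∑ w ∈ closedNbhd G u, f w := sum_le_sum fun u _ => hf.2 u
    _ = ∑ w ∈ S.biUnion (closedNbhd G), f w := (sum_biUnion hS).symm
    _ ≤ ∑ v, f v := sum_le_sum_of_subset_of_nonneg (subset_univ _) fun v _ _ => (hf.1 v).1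

theorem card_le_card_of_isDomSet {S : Finset V}
    (hS : (S : Set V).PairwiseDisjoint (closedNbhd G)) {D : Finset V} (hD : IsDomSet G D) :
    #S ≤ #D := by
  have := card_le_sum_of_isFracDom hS hD.isFracDom_indicator
  rw [sum_indicator_eq_card] at this
  exact_mod_cast this

theorem fracDomNumber_eq_card {S : Finset V} (hdom : IsDomSet G S)
    (hS : (S : Set V).PairwiseDisjoint (closedNbhd G)) : fracDomNumber G = #S := by
  have hmem : (#S : ℝ) ∈ {x | ∃ f, IsFracDom G f ∧ x = ∑ v, f v} :=
    ⟨_, hdom.isFracDom_indicator, (sum_indicator_eq_card S).symm⟩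
  have hlower : (#S : ℝ) ∈ lowerBounds {x | ∃ f, IsFracDom G f ∧ x = ∑ v, f v} := by
    rintro _ ⟨f, hf, rfl⟩
    exact card_le_sum_of_isFracDom hS hf
  exact le_antisymm (csInf_le ⟨_, hlower⟩ hmem) (le_csInf ⟨_, hmem⟩ hlower)

theorem domNumber_eq_card {S : Finset V} (hdom : IsDomSet G S)
    (hS : (S : Set V).PairwiseDisjoint (closedNbhd G)) : domNumber G = #S := by
  refine le_antisymm (Nat.sInf_le ⟨S, rfl, hdom⟩) (le_csInf ⟨_, S, rfl, hdom⟩ ?_)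
  rintro _ ⟨D, rfl, hD⟩
  exact card_le_card_of_isDomSet hS hD

theorem pairwiseDisjoint_closedNbhd {S : Finset V} (hind : ∀ x ∈ S, ∀ y ∈ S, ¬ G.Adj x y)
    (hdisj : ∀ u ∈ S, ∀ v ∈ S, u ≠ v → ∀ w, ¬ (G.Adj u w ∧ G.Adj v w)) :
    (S : Set V).PairwiseDisjoint (closedNbhd G) := by
  intro u hu v hv huv
  rw [Function.onFun, disjoint_left]
  intro w hwu hwv
  rcases mem_closedNbhd.1 hwu with rfl | hw₁ <;> rcases mem_closedNbhd.1 hwv with rfl | hw₂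
  · exact huv rfl
  · exact hind v hv w hu hw₂
  · exact hind u hu w hv hw₁
  · exact hdisj u hu v hv huv w ⟨hw₁, hw₂⟩

omit [Fintype V] in
theorem exists_adj_of_card_le_sum_card_filter {S C : Finset V}
    (hdisj : ∀ u ∈ S, ∀ v ∈ S, u ≠ v → ∀ w, ¬ (G.Adj u w ∧ G.Adj v w))
    (hcard : #C ≤ ∑ u ∈ S, #(C.filter (G.Adj u))) : ∀ w ∈ C, ∃ u ∈ S, G.Adj u w := by
  have hpair : (S : Set V).PairwiseDisjoint fun u => C.filter (G.Adj u) := by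
    intro u hu v hv huv
    refine disjoint_left.2 fun w hwu hwv => hdisj u hu v hv huv w ⟨?_, ?_⟩
    exacts [(mem_filter.1 hwu).2, (mem_filter.1 hwv).2]
  have hcover : S.biUnion (fun u => C.filter (G.Adj u)) = C :=
    eq_of_subset_of_card_le (biUnion_subset.2 fun _ _ => filter_subset _ _)
      (by rwa [card_biUnion hpair])
  intro w hw
  rw [← hcover, mem_biUnion] at hw
  obtain ⟨u, hu, hwu⟩ := hw
  exact ⟨u, hu, (mem_filter.1 hwu).2⟩

theorem Ht_dom_and_fracDom_general {V : Type*} [Fintype V] [DecidableEq V]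
    (H : SimpleGraph V) [DecidableRel H.Adj]
    (t : ℕ) (S : Finset V) (C : Fin t → Finset V)
    (hS : S.card = 4)
    (hC : ∀ j, (C j).card = 4 * 2 ^ (j : ℕ))
    (hcover : S ∪ Finset.univ.biUnion C = Finset.univ)
    (hSindep : ∀ x ∈ S, ∀ y ∈ S, ¬ H.Adj x y)
    (hquarter : ∀ u ∈ S, ∀ j, ((C j).filter fun w => H.Adj u w).card = 2 ^ (j : ℕ))
    (hdisjN : ∀ u ∈ S, ∀ v ∈ S, u ≠ v → ∀ w, ¬ (H.Adj u w ∧ H.Adj v w)) :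
    fracDomNumber H = 4 ∧ domNumber H = 4 := by
  have hpair := pairwiseDisjoint_closedNbhd hSindep hdisjN
  have hdom : IsDomSet H S := by
    intro v hv
    obtain ⟨j, hvj⟩ : ∃ j, v ∈ C j := by
      simpa [hv] using hcover.ge (mem_univ v)
    refine exists_adj_of_card_le_sum_card_filter hdisjN ?_ v hvj
    rw [sum_congr rfl fun u hu => hquarter u hu j, sum_const, hS, hC j, smul_eq_mul]
  rw [fracDomNumber_eq_card hdom hpair, domNumber_eq_card hdom hpair, hS]
  norm_num

/-- for the graph `H_t` (four special vertices `S` plus `t`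
disjoint cliques of sizes `4·2^j`, each vertex of `S` adjacent to exactly a
quarter of each clique, vertices of `S` having pairwise disjoint
neighborhoods), we have `γ_f(H_t) = γ(H_t) = 4`. -/
theorem Ht_dom_and_fracDom {V : Type*} [Fintype V] [DecidableEq V]
    (H : SimpleGraph V) [DecidableRel H.Adj]
    (t : ℕ) (ht : 4 ≤ t) (S : Finset V) (C : Fin t → Finset V)
    (hS : S.card = 4)
    (hC : ∀ j, (C j).card = 4 * 2 ^ (j : ℕ))
    (hcover : S ∪ Finset.univ.biUnion C = Finset.univ)
    (hdSC : ∀ j, Disjoint S (C j))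
    (hdCC : ∀ j k, j ≠ k → Disjoint (C j) (C k))
    (hclique : ∀ j, ∀ x ∈ C j, ∀ y ∈ C j, x ≠ y → H.Adj x y)
    (hCCedge : ∀ j k, j ≠ k → ∀ x ∈ C j, ∀ y ∈ C k, ¬ H.Adj x y)
    (hSindep : ∀ x ∈ S, ∀ y ∈ S, ¬ H.Adj x y)
    (hquarter : ∀ u ∈ S, ∀ j, ((C j).filter fun w => H.Adj u w).card = 2 ^ (j : ℕ))
    (hdisjN : ∀ u ∈ S, ∀ v ∈ S, u ≠ v → ∀ w, ¬ (H.Adj u w ∧ H.Adj v w)) :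
    fracDomNumber H = 4 ∧ domNumber H = 4 :=
  Ht_dom_and_fracDom_general H t S C hS hC hcover hSindep hquarter hdisjN

end SG
end

section
/- For the graph H_t (t ≥ 4) built from four special vertices S plus disjoint cliques of sizes 4, 8, 16, …, 2^{t+1}, with each vertex of S adjacent to exactly one quarter of each clique and the neighborhoods of vertices of S pairwise disjoint, the greedy domination algorithm selects exactly t vertices, one from each clique; hence γ_g(H_t) = t. -/
open Finset

namespace SG

variable {V : Type*}

variable [Fintype V] [LinearOrder V]

/-!
Greedy on `H_t` works from the largest clique down. Before clique `C m` is handled, the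
dominated vertices are the larger cliques together with the set `S'` of neighbours in `S` of
the vertices picked so far. A vertex of `C m` then dominates `4 · 2 ^ m` or `4 · 2 ^ m + 1`
new vertices, whereas a vertex of `S` dominates at most `1 + ∑_{j ≤ m} 2 ^ j = 2 ^ (m + 1)`,
a vertex of a smaller clique at most `4 · 2 ^ (m - 1) + 1`, and a vertex of an already
dominated clique at most one. So greedy picks a vertex of `C m`, and while `S` is not
dominated it picks one whose neighbour in `S` is new. As `t ≥ 4`, all of `S` is dominated
once the last clique `C 0` is handled.
-/

section Greedy

variable {G : SimpleGraph V} [DecidableRel G.Adj]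

lemma greedyAux_univ (n : ℕ) : greedyAux G n univ = [] := by
  cases n <;> simp [greedyAux]

lemma exists_greedyAux_succ_eq_cons {D : Finset V} (hD : D ≠ univ) (n : ℕ) :
    ∃ x, (∀ v, newScore G D v ≤ newScore G D x) ∧
      greedyAux G (n + 1) D = x :: greedyAux G n (D ∪ closedNbhd G x) := by
  obtain ⟨v, -⟩ := not_forall.1 (hD ∘ eq_univ_iff_forall.2)
  have hmax : (univ.filter fun x => ∀ u, newScore G D u ≤ newScore G D x).Nonempty := by
    obtain ⟨x, -, hx⟩ := exists_max_image univ (newScore G D) ⟨v, mem_univ v⟩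
    exact ⟨x, mem_filter.2 ⟨mem_univ x, fun u => hx u (mem_univ u)⟩⟩
  exact ⟨_, (mem_filter.1 (min'_mem _ hmax)).2, by rw [greedyAux, if_neg hD, dif_pos hmax]⟩

end Greedy

structure IsHt (H : SimpleGraph V) [DecidableRel H.Adj] (t : ℕ) (S : Finset V)
    (C : Fin t → Finset V) : Prop where
  card_S : S.card = 4
  card_C : ∀ j, (C j).card = 4 * 2 ^ (j : ℕ)
  union_eq_univ : S ∪ univ.biUnion C = univ
  disjoint_S_C : ∀ j, Disjoint S (C j)
  disjoint_C : ∀ j k, j ≠ k → Disjoint (C j) (C k)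
  adj_of_mem_C : ∀ j, ∀ x ∈ C j, ∀ y ∈ C j, x ≠ y → H.Adj x y
  not_adj_C_C : ∀ j k, j ≠ k → ∀ x ∈ C j, ∀ y ∈ C k, ¬ H.Adj x y
  not_adj_S : ∀ x ∈ S, ∀ y ∈ S, ¬ H.Adj x y
  card_filter_adj_C : ∀ u ∈ S, ∀ j, ((C j).filter fun w => H.Adj u w).card = 2 ^ (j : ℕ)
  no_common_nbr_S : ∀ u ∈ S, ∀ v ∈ S, u ≠ v → ∀ w, ¬ (H.Adj u w ∧ H.Adj v w)

/-- The vertices dominated once greedy has picked a vertex in each clique `C j` with `m ≤ j`,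
`S'` being the neighbours in `S` of the picked vertices. -/
def htDominated {t : ℕ} (C : Fin t → Finset V) (m : ℕ) (S' : Finset V) : Finset V :=
  S' ∪ (univ.filter fun j : Fin t => m ≤ (j : ℕ)).biUnion C

omit [Fintype V] in
lemma mem_htDominated {t : ℕ} {C : Fin t → Finset V} {m : ℕ} {S' : Finset V} {x : V} :
    x ∈ htDominated C m S' ↔ x ∈ S' ∨ ∃ j : Fin t, m ≤ (j : ℕ) ∧ x ∈ C j := by
  simp [htDominated]

namespace IsHt

variable {H : SimpleGraph V} [DecidableRel H.Adj] {t : ℕ} {S : Finset V}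
  {C : Fin t → Finset V} (hH : IsHt H t S C)
include hH

lemma mem_S_or_exists_mem_C (x : V) : x ∈ S ∨ ∃ j, x ∈ C j := by
  have hx : x ∈ S ∪ univ.biUnion C := hH.union_eq_univ ▸ mem_univ x
  simpa using hx

lemma nonempty_C (j : Fin t) : (C j).Nonempty := by
  rw [← card_pos, hH.card_C j]
  positivity

lemma exists_adj_of_mem_C {j : Fin t} {w : V} (hw : w ∈ C j) : ∃ u ∈ S, H.Adj u w := by
  have hunion : S.biUnion (fun u => (C j).filter (H.Adj u)) = C j := by
    refine eq_of_subset_of_card_le (biUnion_subset.2 fun u _ => filter_subset _ _) ?_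
    rw [card_biUnion, sum_congr rfl fun u hu => hH.card_filter_adj_C u hu j, sum_const,
      hH.card_S, hH.card_C, smul_eq_mul]
    intro u hu v hv huv
    exact disjoint_left.2 fun w hwu hwv =>
      hH.no_common_nbr_S u hu v hv huv w ⟨(mem_filter.1 hwu).2, (mem_filter.1 hwv).2⟩
  obtain ⟨u, hu, hwu⟩ := mem_biUnion.1 (hunion ▸ hw)
  exact ⟨u, hu, (mem_filter.1 hwu).2⟩

lemma closedNbhd_of_mem_C {j : Fin t} {w u : V} (hw : w ∈ C j) (hu : u ∈ S)
    (huw : H.Adj u w) : closedNbhd H w = insert u (C j) := by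
  ext x
  simp only [closedNbhd, mem_insert, SimpleGraph.mem_neighborFinset]
  constructor
  · rintro (rfl | hwx)
    · exact Or.inr hw
    rcases hH.mem_S_or_exists_mem_C x with hx | ⟨k, hx⟩
    · exact Or.inl (by_contra fun hxu => hH.no_common_nbr_S x hx u hu hxu w ⟨hwx.symm, huw⟩)
    · obtain rfl | hkj := eq_or_ne k j
      · exact Or.inr hx
      · exact absurd hwx.symm (hH.not_adj_C_C k j hkj x hx w hw)
  · rintro (rfl | hx)
    · exact Or.inr huw.symm
    · obtain rfl | hxw := eq_or_ne x w
      · exact Or.inl rfl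
      · exact Or.inr (hH.adj_of_mem_C j w hw x hx hxw.symm)

lemma card_closedNbhd_of_mem_C {j : Fin t} {w : V} (hw : w ∈ C j) :
    (closedNbhd H w).card = 4 * 2 ^ (j : ℕ) + 1 := by
  obtain ⟨u, hu, huw⟩ := hH.exists_adj_of_mem_C hw
  rw [hH.closedNbhd_of_mem_C hw hu huw,
    card_insert_of_notMem (disjoint_left.1 (hH.disjoint_S_C j) hu), hH.card_C]

lemma disjoint_C_htDominated {S' : Finset V} (hS' : S' ⊆ S) {m : ℕ} {j : Fin t}
    (hj : (j : ℕ) < m) : Disjoint (C j) (htDominated C m S') := by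
  refine disjoint_left.2 fun w hw hwD => ?_
  rcases mem_htDominated.1 hwD with hwS | ⟨k, hk, hwk⟩
  · exact disjoint_left.1 (hH.disjoint_S_C j) (hS' hwS) hw
  · exact disjoint_left.1 (hH.disjoint_C k j (by omega)) hwk hw

lemma mem_htDominated_iff {S' : Finset V} {m : ℕ} {u : V} (hu : u ∈ S) :
    u ∈ htDominated C m S' ↔ u ∈ S' := by
  refine ⟨fun huD => ?_, fun hu' => mem_htDominated.2 (Or.inl hu')⟩
  rcases mem_htDominated.1 huD with hu' | ⟨k, -, huk⟩
  · exact hu'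
  · exact absurd huk (disjoint_left.1 (hH.disjoint_S_C k) hu)

lemma newScore_of_mem_C_of_lt {S' : Finset V} (hS' : S' ⊆ S) {m : ℕ} {j : Fin t}
    (hj : (j : ℕ) < m) {w u : V} (hw : w ∈ C j) (hu : u ∈ S) (huw : H.Adj u w) :
    newScore H (htDominated C m S') w = 4 * 2 ^ (j : ℕ) + if u ∈ S' then 0 else 1 := by
  have hCD := sdiff_eq_self_of_disjoint (hH.disjoint_C_htDominated hS' hj)
  rw [newScore, hH.closedNbhd_of_mem_C hw hu huw]
  by_cases hu' : u ∈ S'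
  · rw [insert_sdiff_of_mem _ ((hH.mem_htDominated_iff hu).2 hu'), hCD, hH.card_C, if_pos hu',
      add_zero]
  · rw [insert_sdiff_of_notMem _ (mt (hH.mem_htDominated_iff hu).1 hu'), hCD,
      card_insert_of_notMem (disjoint_left.1 (hH.disjoint_S_C j) hu), hH.card_C, if_neg hu']

lemma newScore_of_mem_C_le (D : Finset V) {j : Fin t} {w : V} (hw : w ∈ C j) :
    newScore H D w ≤ 4 * 2 ^ (j : ℕ) + 1 :=
  hH.card_closedNbhd_of_mem_C hw ▸ card_le_card sdiff_subset

lemma newScore_of_mem_C_le_one (S' : Finset V) {m : ℕ} {j : Fin t} (hj : m ≤ (j : ℕ))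
    {w : V} (hw : w ∈ C j) : newScore H (htDominated C m S') w ≤ 1 := by
  obtain ⟨u, hu, huw⟩ := hH.exists_adj_of_mem_C hw
  rw [newScore, hH.closedNbhd_of_mem_C hw hu huw, ← card_singleton u]
  refine card_le_card fun x hx => ?_
  obtain ⟨hx, hxD⟩ := mem_sdiff.1 hx
  rcases mem_insert.1 hx with rfl | hx
  · exact mem_singleton_self x
  · exact absurd (mem_htDominated.2 (Or.inr ⟨j, hj, hx⟩)) hxD

/-- Only `u` and its `∑_{j < m} 2 ^ j < 2 ^ m` neighbours in the cliques `C j`, `j < m`, can be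
new. -/
lemma newScore_of_mem_S_le (S' : Finset V) (m : ℕ) {u : V} (hu : u ∈ S) :
    newScore H (htDominated C m S') u ≤ 2 ^ m := by
  set F := univ.filter fun j : Fin t => (j : ℕ) < m
  have hsub : closedNbhd H u \ htDominated C m S' ⊆
      insert u (F.biUnion fun j => (C j).filter (H.Adj u)) := by
    intro x hx
    obtain ⟨hx, hxD⟩ := mem_sdiff.1 hx
    rcases mem_insert.1 hx with rfl | hux
    · exact mem_insert_self x _
    rw [SimpleGraph.mem_neighborFinset] at hux
    rcases hH.mem_S_or_exists_mem_C x with hxS | ⟨j, hxj⟩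
    · exact absurd hux (hH.not_adj_S u hu x hxS)
    by_cases hjm : (j : ℕ) < m
    · exact mem_insert_of_mem (mem_biUnion.2 ⟨j, by simpa [F] using hjm, mem_filter.2 ⟨hxj, hux⟩⟩)
    · exact absurd (mem_htDominated.2 (Or.inr ⟨j, not_lt.1 hjm, hxj⟩)) hxD
  have hsum : ∑ j ∈ F, 2 ^ (j : ℕ) < 2 ^ m := by
    refine (sum_map F Fin.valEmbedding (2 ^ ·)).symm.trans_lt (Nat.geomSum_lt le_rfl fun k hk => ?_)
    obtain ⟨j, hj, rfl⟩ := mem_map.1 hk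
    simpa [F] using hj
  calc newScore H (htDominated C m S') u
      ≤ (F.biUnion fun j => (C j).filter (H.Adj u)).card + 1 :=
        (card_le_card hsub).trans (card_insert_le _ _)
    _ ≤ ∑ j ∈ F, ((C j).filter (H.Adj u)).card + 1 := Nat.add_le_add_right card_biUnion_le 1
    _ = ∑ j ∈ F, 2 ^ (j : ℕ) + 1 := by
        rw [sum_congr rfl fun j _ => hH.card_filter_adj_C u hu j]
    _ ≤ 2 ^ m := hsum

lemma mem_C_of_forall_newScore_le {S' : Finset V} (hS' : S' ⊆ S) {m : ℕ} (hm : m < t) {x : V}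
    (hx : ∀ v, newScore H (htDominated C (m + 1) S') v ≤ newScore H (htDominated C (m + 1) S') x) :
    x ∈ C ⟨m, hm⟩ := by
  obtain ⟨w, hw⟩ := hH.nonempty_C ⟨m, hm⟩
  obtain ⟨u, hu, huw⟩ := hH.exists_adj_of_mem_C hw
  have hlow : 4 * 2 ^ m ≤ newScore H (htDominated C (m + 1) S') x := by
    have hw := hH.newScore_of_mem_C_of_lt hS' m.lt_add_one hw hu huw
    have := hx w
    dsimp only at hw
    split at hw <;> omega
  have hpos : 0 < 2 ^ m := Nat.two_pow_pos m
  rcases hH.mem_S_or_exists_mem_C x with hxS | ⟨k, hxk⟩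
  · have := hH.newScore_of_mem_S_le S' (m + 1) hxS
    rw [pow_succ] at this
    omega
  obtain hkm | hkm | hkm := lt_trichotomy (k : ℕ) m
  · have hk : 2 ^ (k : ℕ) * 2 ≤ 2 ^ m := pow_succ 2 (k : ℕ) ▸ Nat.pow_le_pow_right two_pos hkm
    have := hH.newScore_of_mem_C_le (htDominated C (m + 1) S') hxk
    omega
  · exact (Fin.ext hkm : k = ⟨m, hm⟩) ▸ hxk
  · have := hH.newScore_of_mem_C_le_one S' (m := m + 1) hkm hxk
    omega

lemma notMem_of_forall_newScore_le {S' : Finset V} (hS' : S' ⊂ S) {m : ℕ} (hm : m < t)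
    {x u : V}
    (hx : ∀ v, newScore H (htDominated C (m + 1) S') v ≤ newScore H (htDominated C (m + 1) S') x)
    (hxC : x ∈ C ⟨m, hm⟩) (hu : u ∈ S) (hux : H.Adj u x) : u ∉ S' := by
  obtain ⟨u₀, hu₀, hu₀'⟩ := exists_of_ssubset hS'
  obtain ⟨v, hv⟩ : ((C ⟨m, hm⟩).filter (H.Adj u₀)).Nonempty := by
    rw [← card_pos, hH.card_filter_adj_C u₀ hu₀]
    positivity
  obtain ⟨hvC, hu₀v⟩ := mem_filter.1 hv
  have hv := hH.newScore_of_mem_C_of_lt hS'.subset m.lt_add_one hvC hu₀ hu₀v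
  have hx' := hH.newScore_of_mem_C_of_lt hS'.subset m.lt_add_one hxC hu hux
  intro hu'
  have := hx v
  rw [if_neg hu₀'] at hv
  rw [if_pos hu'] at hx'
  omega

lemma htDominated_union_closedNbhd {S' : Finset V} {m : ℕ} (hm : m < t) {x u : V}
    (hx : x ∈ C ⟨m, hm⟩) (hu : u ∈ S) (hux : H.Adj u x) :
    htDominated C (m + 1) S' ∪ closedNbhd H x = htDominated C m (insert u S') := by
  rw [hH.closedNbhd_of_mem_C hx hu hux]
  ext y
  simp only [mem_union, mem_htDominated, mem_insert]
  constructor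
  · rintro ((hy | ⟨j, hj, hyj⟩) | rfl | hy)
    · exact Or.inl (Or.inr hy)
    · exact Or.inr ⟨j, by omega, hyj⟩
    · exact Or.inl (Or.inl rfl)
    · exact Or.inr ⟨⟨m, hm⟩, le_rfl, hy⟩
  · rintro ((rfl | hy) | ⟨j, hj, hyj⟩)
    · exact Or.inr (Or.inl rfl)
    · exact Or.inl (Or.inl hy)
    · obtain hjm | hjm := eq_or_ne (j : ℕ) m
      · exact Or.inr (Or.inr ((Fin.ext hjm : j = ⟨m, hm⟩) ▸ hyj))
      · exact Or.inl (Or.inr ⟨j, by omega, hyj⟩)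

lemma greedyAux_htDominated (ht : 4 ≤ t) {m n : ℕ} (hm : m ≤ t) (hn : m ≤ n) {S' : Finset V}
    (hS' : S' ⊆ S) (hcard : S'.card = min (t - m) 4) :
    (greedyAux H n (htDominated C m S')).length = m ∧
      ∀ j : Fin t, (j : ℕ) < m → ∃ x ∈ greedyAux H n (htDominated C m S'), x ∈ C j := by
  induction m generalizing n S' with
  | zero =>
    have hS'S : S' = S := eq_of_subset_of_card_le hS' (by rw [hcard, hH.card_S]; omega)
    have hD : htDominated C 0 S' = univ := eq_univ_of_forall fun x =>
      (hH.mem_S_or_exists_mem_C x).elim (fun hx => mem_htDominated.2 (Or.inl (hS'S ▸ hx)))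
        fun ⟨k, hk⟩ => mem_htDominated.2 (Or.inr ⟨k, Nat.zero_le _, hk⟩)
    simp [hD, greedyAux_univ]
  | succ m ih =>
    obtain ⟨n, rfl⟩ : ∃ n', n = n' + 1 := ⟨n - 1, by omega⟩
    have hmt : m < t := hm
    obtain ⟨w, hw⟩ := hH.nonempty_C ⟨m, hmt⟩
    have hD : htDominated C (m + 1) S' ≠ univ := fun h =>
      disjoint_left.1 (hH.disjoint_C_htDominated hS' m.lt_add_one) hw (h ▸ mem_univ w)
    obtain ⟨x, hx, hstep⟩ := exists_greedyAux_succ_eq_cons (G := H) hD n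
    have hxC := hH.mem_C_of_forall_newScore_le hS' hmt hx
    obtain ⟨u, hu, hux⟩ := hH.exists_adj_of_mem_C hxC
    have hcard' : (insert u S').card = min (t - m) 4 := by
      have := hH.card_S
      obtain hlt | rfl := hS'.ssubset_or_eq
      · have := card_lt_card hlt
        rw [card_insert_of_notMem (hH.notMem_of_forall_newScore_le hlt hmt hx hxC hu hux)]
        omega
      · rw [insert_eq_of_mem hu]
        omega
    obtain ⟨ihlen, ihmem⟩ := ih (n := n) (by omega) (by omega) (insert_subset hu hS') hcard'
    rw [hstep, hH.htDominated_union_closedNbhd hmt hxC hu hux]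
    refine ⟨by simp [ihlen], fun j hj => ?_⟩
    obtain hjm | hjm := eq_or_ne (j : ℕ) m
    · exact ⟨x, List.mem_cons_self, (Fin.ext hjm : j = ⟨m, hmt⟩) ▸ hxC⟩
    · obtain ⟨y, hy, hyj⟩ := ihmem j (by omega)
      exact ⟨y, List.mem_cons_of_mem _ hy, hyj⟩

lemma le_card : t ≤ Fintype.card V := by
  choose f hf using hH.nonempty_C
  refine (Fintype.card_fin t).symm.trans_le (Fintype.card_le_of_injective f fun j k hjk => ?_)
  by_contra hne
  exact disjoint_left.1 (hH.disjoint_C j k hne) (hf j) (hjk ▸ hf k)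

end IsHt

/-- on the graph `H_t`, the greedy algorithm selects exactly `t`
vertices, one from each clique; hence `γ_g(H_t) = t`. -/
theorem Ht_greedy {V : Type*} [Fintype V] [LinearOrder V]
    (H : SimpleGraph V) [DecidableRel H.Adj]
    (t : ℕ) (ht : 4 ≤ t) (S : Finset V) (C : Fin t → Finset V)
    (hS : S.card = 4)
    (hC : ∀ j, (C j).card = 4 * 2 ^ (j : ℕ))
    (hcover : S ∪ Finset.univ.biUnion C = Finset.univ)
    (hdSC : ∀ j, Disjoint S (C j))
    (hdCC : ∀ j k, j ≠ k → Disjoint (C j) (C k))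
    (hclique : ∀ j, ∀ x ∈ C j, ∀ y ∈ C j, x ≠ y → H.Adj x y)
    (hCCedge : ∀ j k, j ≠ k → ∀ x ∈ C j, ∀ y ∈ C k, ¬ H.Adj x y)
    (hSindep : ∀ x ∈ S, ∀ y ∈ S, ¬ H.Adj x y)
    (hquarter : ∀ u ∈ S, ∀ j, ((C j).filter fun w => H.Adj u w).card = 2 ^ (j : ℕ))
    (hdisjN : ∀ u ∈ S, ∀ v ∈ S, u ≠ v → ∀ w, ¬ (H.Adj u w ∧ H.Adj v w)) :
    (∀ j, ∃ x ∈ greedyList H, x ∈ C j) ∧ greedyNumber H = t := by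
  have hH : IsHt H t S C :=
    ⟨hS, hC, hcover, hdSC, hdCC, hclique, hCCedge, hSindep, hquarter, hdisjN⟩
  have hstart : htDominated C t ∅ = ∅ := by
    simp [htDominated, filter_false_of_mem fun (j : Fin t) _ => not_le.2 j.isLt]
  obtain ⟨hlen, hmem⟩ := hH.greedyAux_htDominated ht le_rfl hH.le_card (empty_subset S) (by simp)
  rw [hstart] at hlen hmem
  exact ⟨fun j => hmem j j.isLt, hlen⟩

end SG
end

section
/- For every fixed ε with 0 < ε < 1, in the Erdős–Rényi random graph G(n, 1/2), the expected number of dominating sets of size p = ⌊(1−ε) log₂ n⌋ is C(n,p)·(1 − 2^{−p})^{n−p}, and this quantity tends to 0 as n → ∞. Consequently, asymptotically almost surely γ(G(n,1/2)) > (1−ε) log₂ n. -/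
open Finset

namespace SG

variable {V : Type*}

/-! A graph on `V` is an independent fair bit for each pair of vertices. A `p`-set `S`
dominates it iff each of the `n - p` vertices outside `S` has an edge among its `p` pairs to `S`,
which happens with probability `1 - 2⁻ᵖ` independently over these vertices, so the expected
number of dominating `p`-sets is `C(n,p) (1 - 2⁻ᵖ)ⁿ⁻ᵖ`. Once `2ᵖ ≤ n^(1-ε)`, this is at most
`nᵖ exp(-(n - p) 2⁻ᵖ) ≤ exp(2 log² n + 1 - n^ε) → 0`. Since supersets of dominating sets
dominate, a graph with `γ ≤ p ≤ n` has a dominating set of size exactly `p`, so the proportion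
of such graphs is at most that expectation. -/

theorem natCard_subtype_comp_embedding {α β : Type*} [Fintype α] [Fintype β] (ι : β ↪ α)
    (Q : (β → Bool) → Prop) :
    Nat.card {f : α → Bool // Q (f ∘ ι)}
      = Nat.card {g : β → Bool // Q g} * 2 ^ (Fintype.card α - Fintype.card β) := by
  classical
  let e : (α → Bool) ≃ (β → Bool) × ({a // a ∉ Set.range ι} → Bool) :=
    (Equiv.piEquivPiSubtypeProd (· ∈ Set.range ι) fun _ => Bool).trans
      ((Equiv.arrowCongr (Equiv.ofInjective ι ι.injective).symm (Equiv.refl Bool)).prodCongr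
        (Equiv.refl _))
  have he : ∀ f, (e f).1 = f ∘ ι := fun f => rfl
  rw [Nat.card_congr ((e.subtypeEquiv fun f => by rw [he]).trans
      Equiv.prodSubtypeFstEquivSubtypeProd),
    Nat.card_prod, Nat.card_eq_fintype_card (α := _ → Bool), Fintype.card_fun, Fintype.card_bool,
    Fintype.card_subtype_compl, Set.card_range_of_injective ι.injective]

theorem natCard_exists_eq_true (α : Type*) [Fintype α] :
    Nat.card {k : α → Bool // ∃ a, k a = true} = 2 ^ Fintype.card α - 1 := by
  classical
  have hfalse : {k : α → Bool // ∃ a, k a = true} ≃ {k : α → Bool // k ≠ fun _ => false} :=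
    Equiv.subtypeEquivRight fun k => by simp [funext_iff]
  rw [Nat.card_congr hfalse, Nat.card_eq_fintype_card, Fintype.card_subtype_compl,
    Fintype.card_subtype_eq, Fintype.card_fun, Fintype.card_bool]

theorem natCard_forall_exists_eq_true (α β : Type*) [Fintype α] [Fintype β] :
    Nat.card {g : α × β → Bool // ∀ a, ∃ b, g (a, b) = true}
      = (2 ^ Fintype.card β - 1) ^ Fintype.card α := by
  have e : {g : α × β → Bool // ∀ a, ∃ b, g (a, b) = true}
      ≃ ∀ _ : α, {k : β → Bool // ∃ b, k b = true} :=
    ((Equiv.curry α β Bool).subtypeEquiv (q := fun k => ∀ a, ∃ b, k a b = true)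
      fun _ => Iff.rfl).trans
      (Equiv.subtypePiEquivPi (β := fun _ => β → Bool) (p := fun _ k => ∃ b, k b = true))
  rw [Nat.card_congr e, Nat.card_pi, prod_const, natCard_exists_eq_true, card_univ]

theorem sum_natCard_subtype_comm {α β : Type*} [Fintype α] [Fintype β] (P : α → β → Prop) :
    ∑ a, Nat.card {b // P a b} = ∑ b, Nat.card {a // P a b} := by
  classical
  simp only [Nat.card_eq_fintype_card, Fintype.card_subtype, card_filter]
  exact sum_comm

variable (V) in
open Classical in
noncomputable def edgeIndicatorEquiv : SimpleGraph V ≃ ({e : Sym2 V // ¬ e.IsDiag} → Bool) where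
  toFun G e := decide (e.1 ∈ G.edgeSet)
  invFun f := SimpleGraph.fromEdgeSet {e | ∃ h : ¬ e.IsDiag, f ⟨e, h⟩ = true}
  left_inv G := by
    ext u v
    simp only [SimpleGraph.fromEdgeSet_adj, Set.mem_ofPred_eq, decide_eq_true_eq,
      SimpleGraph.mem_edgeSet]
    exact ⟨fun h => h.1.2, fun h => ⟨⟨by simpa using h.ne, h⟩, h.ne⟩⟩
  right_inv f := by
    funext ⟨e, he⟩
    induction e with
    | _ a b => simp [SimpleGraph.edgeSet_fromEdgeSet, he]

section Counting

variable [Fintype V] [DecidableEq V]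

def crossEdge (S : Finset V) : ↥Sᶜ × ↥S ↪ {e : Sym2 V // ¬ e.IsDiag} where
  toFun x := ⟨s(x.2.1, x.1.1), by
    simpa using fun h : (x.2 : V) = x.1 => (mem_compl.1 x.1.2) (h ▸ x.2.2)⟩
  inj' := by
    rintro ⟨⟨v, hv⟩, ⟨u, hu⟩⟩ ⟨⟨v', hv'⟩, ⟨u', hu'⟩⟩ h
    simp only [Subtype.mk.injEq, Sym2.eq_iff] at h
    rw [mem_compl] at hv hv'
    rcases h with ⟨rfl, rfl⟩ | ⟨rfl, rfl⟩
    · rfl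
    · exact absurd hu hv'

theorem edgeIndicatorEquiv_crossEdge (G : SimpleGraph V) (S : Finset V) (x : ↥Sᶜ × ↥S) :
    edgeIndicatorEquiv V G (crossEdge S x) = true ↔ G.Adj x.2 x.1 := by
  simp only [edgeIndicatorEquiv, Equiv.coe_fn_mk, decide_eq_true_eq]
  exact Iff.rfl

theorem isDomSet_iff_edgeIndicator (G : SimpleGraph V) (S : Finset V) :
    IsDomSet G S ↔ ∀ v, ∃ u, (edgeIndicatorEquiv V G ∘ crossEdge S) (v, u) = true := by
  simp only [Function.comp_apply, edgeIndicatorEquiv_crossEdge, Subtype.forall, Subtype.exists,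
    mem_compl, IsDomSet, exists_prop]

theorem card_compl_mul_card_le_choose_two (S : Finset V) :
    #Sᶜ * #S ≤ (Fintype.card V).choose 2 := by
  have h := Fintype.card_le_of_embedding (crossEdge S)
  rwa [Sym2.card_subtype_not_diag, Fintype.card_prod, Fintype.card_coe, Fintype.card_coe] at h

theorem natCard_isDomSet (S : Finset V) :
    Nat.card {G : SimpleGraph V // IsDomSet G S}
      = (2 ^ #S - 1) ^ #Sᶜ * 2 ^ ((Fintype.card V).choose 2 - #Sᶜ * #S) := by
  rw [Nat.card_congr ((edgeIndicatorEquiv V).subtypeEquiv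
      (q := fun f => ∀ v, ∃ u, (f ∘ crossEdge S) (v, u) = true) (isDomSet_iff_edgeIndicator · S)),
    natCard_subtype_comp_embedding (crossEdge S) (fun g => ∀ v, ∃ u, g (v, u) = true),
    natCard_forall_exists_eq_true, Sym2.card_subtype_not_diag,
    Fintype.card_prod, Fintype.card_coe, Fintype.card_coe]

theorem natCard_isDomSet_div (S : Finset V) :
    (Nat.card {G : SimpleGraph V // IsDomSet G S} : ℝ) / 2 ^ (Fintype.card V).choose 2
      = (1 - (1 / 2 : ℝ) ^ #S) ^ #Sᶜ := by
  have hbase : (1 : ℝ) - (1 / 2) ^ #S = (2 ^ #S - 1) / 2 ^ #S := by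
    rw [one_div, inv_pow]; field_simp
  rw [natCard_isDomSet]
  push_cast [Nat.one_le_two_pow]
  rw [pow_sub₀ _ two_ne_zero (card_compl_mul_card_le_choose_two S), pow_mul', hbase, div_pow]
  field_simp

theorem sum_natCard_isDomSet_div (p : ℕ) :
    (∑ G : SimpleGraph V, (Nat.card {S : Finset V // #S = p ∧ IsDomSet G S} : ℝ))
        / 2 ^ (Fintype.card V).choose 2
      = ((Fintype.card V).choose p : ℝ) * (1 - (1 / 2 : ℝ) ^ p) ^ (Fintype.card V - p) := by
  have hS (S : Finset V) :
      (Nat.card {G : SimpleGraph V // #S = p ∧ IsDomSet G S} : ℝ) / 2 ^ (Fintype.card V).choose 2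
        = if #S = p then (1 - (1 / 2 : ℝ) ^ p) ^ (Fintype.card V - p) else 0 := by
    split_ifs with h
    · simp only [h, true_and, natCard_isDomSet_div, card_compl]
    · simp [h]
  rw [← Nat.cast_sum, sum_natCard_subtype_comm, Nat.cast_sum, sum_div,
    sum_congr rfl fun S _ => hS S, sum_ite, sum_const_zero, add_zero, sum_const, nsmul_eq_mul, ← Fintype.card_subtype,
    Fintype.card_finset_len]

end Counting

theorem IsDomSet.mono {G : SimpleGraph V} {S T : Finset V} (h : IsDomSet G S) (hST : S ⊆ T) :
    IsDomSet G T := fun v hv =>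
  let ⟨u, hu, hadj⟩ := h v fun hvS => hv (hST hvS)
  ⟨u, hST hu, hadj⟩

theorem exists_isDomSet_card_eq_of_domNumber_le [Fintype V] {G : SimpleGraph V} {q : ℕ}
    (hγ : domNumber G ≤ q) (hq : q ≤ Fintype.card V) : ∃ S : Finset V, #S = q ∧ IsDomSet G S := by
  classical
  obtain ⟨S, hScard, hS⟩ : ∃ S : Finset V, #S = domNumber G ∧ IsDomSet G S :=
    Nat.sInf_mem (s := {k | ∃ S : Finset V, #S = k ∧ IsDomSet G S})
      ⟨_, univ, rfl, fun v hv => absurd (mem_univ v) hv⟩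
  obtain ⟨T, hST, -, hT⟩ := exists_subsuperset_card_eq (subset_univ S) (hScard ▸ hγ)
    (by rwa [card_univ])
  exact ⟨T, hT, hS.mono hST⟩

theorem natCard_domNumber_le_le_sum [Fintype V] [DecidableEq V] {q : ℕ}
    (hq : q ≤ Fintype.card V) :
    Nat.card {G : SimpleGraph V // domNumber G ≤ q}
      ≤ ∑ G : SimpleGraph V, Nat.card {S : Finset V // #S = q ∧ IsDomSet G S} := by
  classical
  rw [Nat.card_eq_fintype_card, Fintype.card_subtype, card_filter]
  refine sum_le_sum fun G _ => ?_
  split_ifs with hγ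
  · obtain ⟨S, hS⟩ := exists_isDomSet_card_eq_of_domNumber_le hγ hq
    exact Nat.card_pos_iff.2 ⟨⟨⟨S, hS⟩⟩, inferInstance⟩
  · exact Nat.zero_le _

section Asymptotics

open Real Filter Topology Asymptotics

theorem tendsto_rpow_sub_mul_log_sq_atTop {ε : ℝ} (hε : 0 < ε) (c : ℝ) :
    Tendsto (fun x : ℝ => x ^ ε - c * log x ^ 2) atTop atTop := by
  have h : (fun x : ℝ => c * log x ^ 2) =o[atTop] (fun x => x ^ ε) :=
    ((isLittleO_log_rpow_rpow_atTop 2 hε).congr_left fun x => rpow_two _).const_mul_left c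
  exact (IsEquivalent.refl.sub_isLittleO h).symm.tendsto_atTop (tendsto_rpow_atTop hε)

theorem choose_mul_one_sub_pow_le_exp {n : ℕ} (hn : 0 < n) (p : ℕ) {x : ℝ} (hx : x ≤ 1) :
    (n.choose p : ℝ) * (1 - x) ^ (n - p) ≤ exp (p * log n - (n - p : ℕ) * x) := by
  have hchoose : (n.choose p : ℝ) ≤ exp (p * log n) := by
    rw [← log_pow, exp_log (by positivity)]
    exact_mod_cast Nat.choose_le_pow n p
  have hpow : (1 - x) ^ (n - p) ≤ exp (-((n - p : ℕ) * x)) :=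
    calc (1 - x) ^ (n - p) ≤ exp (-x) ^ (n - p) :=
          pow_le_pow_left₀ (by linarith) (one_sub_le_exp_neg x) _
      _ = exp (-((n - p : ℕ) * x)) := by rw [← exp_nat_mul, mul_neg]
  calc (n.choose p : ℝ) * (1 - x) ^ (n - p) ≤ exp (p * log n) * exp (-((n - p : ℕ) * x)) :=
        mul_le_mul hchoose hpow (pow_nonneg (by linarith) _) (exp_nonneg _)
    _ = exp (p * log n - (n - p : ℕ) * x) := by rw [← exp_add, ← sub_eq_add_neg]

theorem two_pow_le_of_le_rpow {ε : ℝ} (hε : 0 ≤ ε) {n p : ℕ} (hn : 0 < n)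
    (h : (2 : ℝ) ^ p ≤ (n : ℝ) ^ (1 - ε)) : 2 ^ p ≤ n := by
  have h' : (2 : ℝ) ^ p ≤ n :=
    h.trans (rpow_le_self_of_one_le (by exact_mod_cast hn) (by linarith))
  exact_mod_cast h'

theorem natCast_le_two_mul_log_of_two_pow_le {p : ℕ} {y : ℝ} (h : (2 : ℝ) ^ p ≤ y) :
    (p : ℝ) ≤ 2 * log y := by
  have hlog : p * log 2 ≤ log y := by
    rw [← log_pow]
    exact log_le_log (by positivity) h
  nlinarith [log_two_gt_d9, Nat.cast_nonneg (α := ℝ) p]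

theorem rpow_sub_one_le_mul_half_pow {ε : ℝ} {n p : ℕ} (hn : 0 < n)
    (h : (2 : ℝ) ^ p ≤ (n : ℝ) ^ (1 - ε)) :
    (n : ℝ) ^ ε - 1 ≤ (n - p : ℕ) * (1 / 2 : ℝ) ^ p := by
  have hn' : (0 : ℝ) < n := by exact_mod_cast hn
  have hmain : (n : ℝ) ^ ε ≤ n * (1 / 2 : ℝ) ^ p := by
    rw [show ε = 1 - (1 - ε) by ring, rpow_sub hn', rpow_one, one_div, inv_pow, div_eq_mul_inv]
    gcongr
  have hp : (p : ℝ) * (1 / 2 : ℝ) ^ p ≤ 1 := by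
    rw [one_div, inv_pow, ← div_eq_mul_inv, div_le_one (by positivity)]
    exact_mod_cast Nat.lt_two_pow_self.le
  have hsub : (n : ℝ) - p ≤ (n - p : ℕ) := by
    rw [sub_le_iff_le_add]
    exact_mod_cast le_tsub_add
  nlinarith [pow_nonneg (by norm_num : (0 : ℝ) ≤ 1 / 2) p]

theorem two_pow_floor_mul_logb_le {a : ℝ} (ha : 0 ≤ a) {n : ℕ} (hn : 0 < n) :
    (2 : ℝ) ^ ⌊a * logb 2 n⌋₊ ≤ (n : ℝ) ^ a := by
  have hlog : 0 ≤ a * logb 2 n :=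
    mul_nonneg ha (logb_nonneg one_lt_two (by exact_mod_cast hn))
  calc (2 : ℝ) ^ ⌊a * logb 2 n⌋₊ = 2 ^ (⌊a * logb 2 n⌋₊ : ℝ) := (rpow_natCast _ _).symm
    _ ≤ 2 ^ (a * logb 2 n) := rpow_le_rpow_of_exponent_le one_le_two (Nat.floor_le hlog)
    _ = n ^ a := by
      rw [mul_comm, rpow_mul zero_le_two, rpow_logb two_pos (by norm_num) (by positivity)]

theorem tendsto_choose_mul_one_sub_half_pow {ε : ℝ} (hε : 0 < ε) {p : ℕ → ℕ}
    (hp : ∀ᶠ n : ℕ in atTop, (2 : ℝ) ^ p n ≤ (n : ℝ) ^ (1 - ε)) :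
    Tendsto (fun n : ℕ => (n.choose (p n) : ℝ) * (1 - (1 / 2 : ℝ) ^ p n) ^ (n - p n))
      atTop (𝓝 0) := by
  have hhalf (n : ℕ) : (1 / 2 : ℝ) ^ p n ≤ 1 := pow_le_one₀ (by norm_num) (by norm_num)
  have hbound : Tendsto (fun n : ℕ => exp (1 + -((n : ℝ) ^ ε - 2 * log n ^ 2))) atTop (𝓝 0) :=
    tendsto_exp_atBot.comp <| tendsto_atBot_add_const_left _ 1 <| tendsto_neg_atTop_atBot.comp <|
      (tendsto_rpow_sub_mul_log_sq_atTop hε 2).comp tendsto_natCast_atTop_atTop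
  refine squeeze_zero' (Eventually.of_forall fun n =>
    mul_nonneg (Nat.cast_nonneg _) (pow_nonneg (by linarith [hhalf n]) _)) ?_ hbound
  filter_upwards [hp, eventually_gt_atTop 0] with n h2p hn
  have hp_le : (p n : ℝ) ≤ 2 * log n :=
    natCast_le_two_mul_log_of_two_pow_le (by exact_mod_cast two_pow_le_of_le_rpow hε.le hn h2p)
  have hsum := rpow_sub_one_le_mul_half_pow hn h2p
  refine (choose_mul_one_sub_pow_le_exp hn (p n) (hhalf n)).trans (exp_le_exp.2 ?_)
  nlinarith [mul_le_mul_of_nonneg_right hp_le (log_natCast_nonneg n)]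

end Asymptotics

/-- in `G(n, 1/2)`, the expected number of dominating sets of
size `p = ⌊(1-ε) log₂ n⌋` equals `C(n,p)·(1 - 2^{-p})^{n-p}`, this quantity
tends to `0`, and consequently the proportion of graphs on `n` vertices with
`γ ≤ p` tends to `0` (i.e. a.a.s. `γ(G(n,1/2)) > (1-ε) log₂ n`). -/
theorem random_dom_lower (ε : ℝ) (hε0 : 0 < ε) (hε1 : ε < 1)
    (p : ℕ → ℕ) (hp : ∀ n, p n = ⌊(1 - ε) * Real.logb 2 n⌋₊) :
    (∀ n : ℕ,
        (∑ G : SimpleGraph (Fin n),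
            (Nat.card {S : Finset (Fin n) // S.card = p n ∧ IsDomSet G S} : ℝ))
              / 2 ^ n.choose 2
          = (n.choose (p n) : ℝ) * (1 - (1 / 2 : ℝ) ^ p n) ^ (n - p n)) ∧
      Filter.Tendsto
        (fun n : ℕ => (n.choose (p n) : ℝ) * (1 - (1 / 2 : ℝ) ^ p n) ^ (n - p n))
        Filter.atTop (nhds 0) ∧
      Filter.Tendsto
        (fun n : ℕ =>
          (Nat.card {G : SimpleGraph (Fin n) // domNumber G ≤ p n} : ℝ) / 2 ^ n.choose 2)
        Filter.atTop (nhds 0) := by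
  have hp2 : ∀ᶠ n : ℕ in Filter.atTop, (2 : ℝ) ^ p n ≤ (n : ℝ) ^ (1 - ε) := by
    filter_upwards [Filter.eventually_gt_atTop 0] with n hn
    rw [hp]
    exact two_pow_floor_mul_logb_le (by linarith) hn
  have hmean (n : ℕ) := by
    simpa only [Fintype.card_fin] using sum_natCard_isDomSet_div (V := Fin n) (p n)
  have hlim := tendsto_choose_mul_one_sub_half_pow hε0 hp2
  refine ⟨hmean, hlim, squeeze_zero' (Filter.Eventually.of_forall fun n => by positivity) ?_ hlim⟩
  filter_upwards [hp2, Filter.eventually_gt_atTop 0] with n h2p hn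
  have hpn : p n ≤ Fintype.card (Fin n) := by
    simpa using Nat.lt_two_pow_self.le.trans (two_pow_le_of_le_rpow hε0.le hn h2p)
  rw [← hmean]
  gcongr
  exact_mod_cast natCard_domNumber_le_le_sum hpn

end SG
end
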